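/- Let 2 ≤ k ≤ n and m > 0. Then there exists a constant C > 0, depending only on n, k and m, such that for every λ = (λ_1, …, λ_n) ∈ Γ_k with λ_1 ≥ … ≥ λ_n and σ_k(λ) ≥ m, one has σ_{k−1}(λ) ≥ C·λ_1^{1/(k−1)}. -/

import Mathlib

noncomputable def esymm (n m : ℕ) (lam : Fin n → ℝ) : ℝ :=
  ∑ s ∈ (Finset.univ : Finset (Fin n)).powersetCard m, ∏ i ∈ s, lam i

def GardingCone (n k : ℕ) : Set (Fin n → ℝ) :=
  {lam | ∀ j, 1 ≤ j → j ≤ k → 0 < esymm n j lam}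

/-!
Newton's inequality `σ_j σ_{j+2} ≤ σ_{j+1}²` holds for every real vector. For the normalised
means `σ_j / C(n, j)` it is proved by induction on `n`: replace the vector by the roots of the
derivative of `∏ (X - λ_i)` (real by Rolle's theorem), or, when `j + 2 = n`, by the reciprocals
of its entries; binomial log-concavity then removes the normalisation. Newton's inequality shows
that deleting an entry of a vector in `Γ_{k+1}` leaves a vector in `Γ_k`. Hence for a decreasing
`λ ∈ Γ_k` the entries `λ_1, …, λ_k` are positive, peeling off the largest entries gives
`σ_{k-1}(λ) ≥ P := λ_1 ⋯ λ_{k-1}`, and since the nonpositive entries only lower `σ_k`,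
`σ_k(λ) ≤ C(n, k) P λ_k`. As `P ≥ λ_1 λ_k^{k-2}`, this yields
`λ_1 (σ_k / C(n, k))^{k-2} ≤ λ_1 (P λ_k)^{k-2} ≤ P^{k-1} ≤ σ_{k-1}^{k-1}`.
-/

theorem Nat.choose_mul_choose_add_two_le_sq (n j : ℕ) :
    n.choose j * n.choose (j + 2) ≤ n.choose (j + 1) ^ 2 := by
  rcases lt_or_ge n (j + 2) with hn | hn
  · simp [Nat.choose_eq_zero_of_lt hn]
  have h1 := Nat.choose_succ_right_eq n j
  have h2 := Nat.choose_succ_right_eq n (j + 1)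
  have key : n.choose j * n.choose (j + 2) * ((j + 2) * (n - j)) =
      n.choose (j + 1) ^ 2 * ((j + 1) * (n - (j + 1))) := by
    calc _ = (n.choose j * (n - j)) * (n.choose (j + 1 + 1) * (j + 1 + 1)) := by ring
      _ = _ := by rw [← h1, h2]; ring
  have hpos : 0 < (j + 2) * (n - j) := Nat.mul_pos (by omega) (by omega)
  have hle : (j + 1) * (n - (j + 1)) ≤ (j + 2) * (n - j) := Nat.mul_le_mul (by omega) (by omega)
  exact Nat.le_of_mul_le_mul_right (key ▸ Nat.mul_le_mul_left _ hle) hpos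

namespace Multiset

section CommSemiring

variable {R : Type*} [CommSemiring R]

@[simp]
theorem esymm_zero (s : Multiset R) : s.esymm 0 = 1 := by
  simp [esymm]

theorem esymm_cons_succ (a : R) (s : Multiset R) (j : ℕ) :
    (a ::ₘ s).esymm (j + 1) = s.esymm (j + 1) + a * s.esymm j := by
  simp only [esymm, powersetCard_cons, map_add, sum_add, map_map, Function.comp_def, prod_cons,
    sum_map_mul_left]

theorem esymm_eq_zero_of_card_lt {s : Multiset R} {j : ℕ} (h : card s < j) : s.esymm j = 0 := by
  simp [esymm, powersetCard_eq_empty _ h]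

theorem esymm_one (s : Multiset R) : s.esymm 1 = s.sum := by
  simp [esymm, powersetCard_one]

theorem esymm_card (s : Multiset R) : s.esymm (card s) = s.prod := by
  induction s using Multiset.induction with
  | empty => simp
  | cons a s ih =>
    rw [card_cons, esymm_cons_succ, esymm_eq_zero_of_card_lt (Nat.lt_succ_self _), ih, prod_cons,
      zero_add]

end CommSemiring

theorem esymm_map_inv_mul_prod {K : Type*} [Field K] {s : Multiset K} (hs : ∀ x ∈ s, x ≠ 0)
    {j : ℕ} (hj : j ≤ card s) : (s.map (·⁻¹)).esymm j * s.prod = s.esymm (card s - j) := by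
  induction s using Multiset.induction generalizing j with
  | empty => simp_all
  | cons a s ih =>
    have ha : a ≠ 0 := hs a (mem_cons_self a s)
    have hs' : ∀ x ∈ s, x ≠ 0 := fun x hx => hs x (mem_cons_of_mem hx)
    rw [card_cons] at hj ⊢
    rcases j with _ | j
    · simpa using (esymm_card (a ::ₘ s)).symm
    rw [map_cons, esymm_cons_succ, prod_cons]
    rcases Nat.lt_or_eq_of_le (Nat.le_of_succ_le_succ hj) with hj | rfl
    · rw [show card s + 1 - (j + 1) = card s - (j + 1) + 1 by omega, esymm_cons_succ,
        show card s - (j + 1) + 1 = card s - j by omega, ← ih hs' hj, ← ih hs' hj.le]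
      field_simp
      ring
    · rw [esymm_eq_zero_of_card_lt (by simp), Nat.sub_self, esymm_zero, zero_add,
        show a⁻¹ * (map (·⁻¹) s).esymm (card s) * (a * s.prod)
          = (map (·⁻¹) s).esymm (card s) * s.prod by field_simp,
        ih hs' le_rfl, Nat.sub_self, esymm_zero]

noncomputable def esymmMean (s : Multiset ℝ) (j : ℕ) : ℝ :=
  s.esymm j / (card s).choose j

theorem esymmMean_eq_zero_of_card_lt {s : Multiset ℝ} {j : ℕ} (h : card s < j) :
    s.esymmMean j = 0 := by
  simp [esymmMean, esymm_eq_zero_of_card_lt h]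

theorem esymmMean_card (s : Multiset ℝ) : s.esymmMean (card s) = s.prod := by
  simp [esymmMean, esymm_card]

theorem esymmMean_map_inv_mul_prod {s : Multiset ℝ} (hs : ∀ x ∈ s, x ≠ 0) {j : ℕ}
    (hj : j ≤ card s) : (s.map (·⁻¹)).esymmMean j * s.prod = s.esymmMean (card s - j) := by
  simp only [esymmMean, card_map, Nat.choose_symm hj, div_mul_eq_mul_div,
    esymm_map_inv_mul_prod hs hj]

open Polynomial in
/-- The witness is the multiset of roots of `p'`, `p = ∏ (X - a)`: by Rolle's theorem `p'` has
`card s - 1` real roots, and Vieta's formulas for `p` and `p'` compare the means. -/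
theorem exists_card_eq_esymmMean_eq {s : Multiset ℝ} {n : ℕ} (hs : card s = n + 1) :
    ∃ t : Multiset ℝ, card t = n ∧ ∀ j ≤ n, t.esymmMean j = s.esymmMean j := by
  set p : ℝ[X] := (s.map fun a => X - C a).prod
  have hp_roots : p.roots = s := roots_multiset_prod_X_sub_C s
  have hp_deg : p.natDegree = n + 1 := by rw [natDegree_multiset_prod_X_sub_C_eq_card, hs]
  have hp_lead : p.leadingCoeff = 1 :=
    (monic_multiset_prod_of_monic _ _ fun a _ => monic_X_sub_C a).leadingCoeff
  have hq_deg : (derivative p).natDegree = n := by simp [hp_deg]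
  have hq_roots : card (derivative p).roots = n := by
    refine le_antisymm (hq_deg ▸ card_roots' _) ?_
    have := card_roots_le_derivative p
    rw [hp_roots, hs] at this
    omega
  refine ⟨(derivative p).roots, hq_roots, fun j hj => ?_⟩
  have hvieta := coeff_eq_esymm_roots_of_card (hq_roots.trans hq_deg.symm)
    (show n - j ≤ (derivative p).natDegree by omega)
  rw [coeff_derivative, coeff_eq_esymm_roots_of_card (hp_roots ▸ hs.trans hp_deg.symm)
    (by omega), hq_deg, leadingCoeff_derivative, hp_lead, hp_deg, hp_roots,
    show n - (n - j) = j by omega, show n + 1 - (n - j + 1) = j by omega] at hvieta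
  have hcast : ((n + 1 - j : ℕ) : ℝ) = (n - j : ℕ) + 1 := by
    rw [Nat.sub_add_comm hj]; push_cast; ring
  have key : (n + 1 : ℝ) * (derivative p).roots.esymm j = (n + 1 - j : ℕ) * s.esymm j := by
    push_cast [hcast] at hvieta ⊢
    apply mul_left_cancel₀ (pow_ne_zero j (by norm_num : (-1 : ℝ) ≠ 0))
    linear_combination -hvieta
  have hchoose : (n.choose j : ℝ) * (n + 1) = (n + 1).choose j * (n + 1 - j : ℕ) := by
    exact_mod_cast Nat.choose_mul_succ_eq n j
  have hpos : (0 : ℝ) < n.choose j := Nat.cast_pos.2 (Nat.choose_pos hj)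
  have hpos' : (0 : ℝ) < (n + 1).choose j := Nat.cast_pos.2 (Nat.choose_pos (by omega))
  rw [esymmMean, esymmMean, hs, hq_roots, div_eq_div_iff hpos.ne' hpos'.ne']
  apply mul_left_cancel₀ (show (n + 1 : ℝ) ≠ 0 by positivity)
  linear_combination ((n + 1).choose j : ℝ) * key - s.esymm j * hchoose

theorem esymmMean_zero_mul_esymmMean_two_le_sq (s : Multiset ℝ) :
    s.esymmMean 0 * s.esymmMean 2 ≤ s.esymmMean 1 ^ 2 := by
  induction hN : card s using Nat.strong_induction_on generalizing s with
  | _ N ih =>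
  rcases lt_trichotomy N 2 with hN2 | rfl | hN2
  · rw [esymmMean_eq_zero_of_card_lt (j := 2) (hN ▸ hN2), mul_zero]
    positivity
  · obtain ⟨a, b, rfl⟩ := card_eq_two.1 hN
    simp only [esymmMean, insert_eq_cons, esymm_pair_one, esymm_pair_two]
    norm_num
    nlinarith [sq_nonneg (a - b)]
  · obtain ⟨t, ht, hts⟩ := exists_card_eq_esymmMean_eq (s := s) (n := N - 1) (by omega)
    rw [← hts 0 (by omega), ← hts 1 (by omega), ← hts 2 (by omega)]
    exact ih _ (by omega) t ht

theorem esymmMean_mul_esymmMean_le_sq (s : Multiset ℝ) (j : ℕ) :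
    s.esymmMean j * s.esymmMean (j + 2) ≤ s.esymmMean (j + 1) ^ 2 := by
  induction hN : card s using Nat.strong_induction_on generalizing s with
  | _ N ih =>
  rcases lt_trichotomy (j + 2) N with hjN | hjN | hjN
  · obtain ⟨t, ht, hts⟩ := exists_card_eq_esymmMean_eq (s := s) (n := N - 1) (by omega)
    rw [← hts j (by omega), ← hts (j + 1) (by omega), ← hts (j + 2) (by omega)]
    exact ih _ (by omega) t ht
  · by_cases h0 : (0 : ℝ) ∈ s
    · rw [hjN, ← hN, esymmMean_card, prod_eq_zero h0, mul_zero]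
      positivity
    -- the reciprocals turn the top three means into the bottom three
    have hs : ∀ x ∈ s, x ≠ 0 := fun x hx h => h0 (h ▸ hx)
    have h0' := esymmMean_map_inv_mul_prod hs (j := 0) (by omega)
    have h1' := esymmMean_map_inv_mul_prod hs (j := 1) (by omega)
    have h2' := esymmMean_map_inv_mul_prod hs (j := 2) (by omega)
    rw [hN, show N - 0 = j + 2 by omega] at h0'
    rw [hN, show N - 1 = j + 1 by omega] at h1'
    rw [hN, show N - 2 = j by omega] at h2'
    rw [← h0', ← h1', ← h2']
    nlinarith [esymmMean_zero_mul_esymmMean_two_le_sq (s.map (·⁻¹)), sq_nonneg s.prod]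
  · rw [esymmMean_eq_zero_of_card_lt (j := j + 2) (hN ▸ hjN), mul_zero]
    positivity

theorem esymm_mul_esymm_le_sq (s : Multiset ℝ) (j : ℕ) :
    s.esymm j * s.esymm (j + 2) ≤ s.esymm (j + 1) ^ 2 := by
  rcases lt_or_ge (card s) (j + 2) with hs | hs
  · rw [esymm_eq_zero_of_card_lt hs, mul_zero]
    positivity
  rcases le_or_gt (s.esymm j * s.esymm (j + 2)) 0 with hneg | hpos
  · exact hneg.trans (sq_nonneg _)
  have hc0 : (0 : ℝ) < (card s).choose j := Nat.cast_pos.2 (Nat.choose_pos (by omega))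
  have hc1 : (0 : ℝ) < (card s).choose (j + 1) := Nat.cast_pos.2 (Nat.choose_pos (by omega))
  have hc2 : (0 : ℝ) < (card s).choose (j + 2) := Nat.cast_pos.2 (Nat.choose_pos hs)
  have hlc : ((card s).choose j : ℝ) * (card s).choose (j + 2) ≤ (card s).choose (j + 1) ^ 2 := by
    exact_mod_cast Nat.choose_mul_choose_add_two_le_sq _ _
  have hmean := esymmMean_mul_esymmMean_le_sq s j
  simp only [esymmMean, div_pow] at hmean
  rw [div_mul_div_comm, div_le_div_iff₀ (by positivity) (by positivity)] at hmean
  refine le_of_mul_le_mul_right ?_ (by positivity : (0 : ℝ) < (card s).choose (j + 1) ^ 2)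
  nlinarith

def gardingCone (k : ℕ) : Set (Multiset ℝ) :=
  {s | ∀ j ≤ k, 0 < s.esymm j}

theorem gardingCone_anti : Antitone gardingCone :=
  fun _ _ hkk' _ hs j hj => hs j (hj.trans hkk')

theorem mem_gardingCone_of_cons_mem {a : ℝ} {s : Multiset ℝ} {k : ℕ}
    (h : a ::ₘ s ∈ gardingCone (k + 1)) : s ∈ gardingCone k := by
  induction k with
  | zero => intro j hj; simp [Nat.le_zero.1 hj]
  | succ k ih =>
    have hs := ih (gardingCone_anti (Nat.le_succ _) h)
    intro j hj
    rcases Nat.lt_or_eq_of_le hj with hj | rfl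
    · exact hs j (by omega)
    have h1 := h (k + 1) (by omega)
    have h2 := h (k + 2) le_rfl
    rw [esymm_cons_succ] at h1 h2
    -- with `x = σ_k s > 0`, `y = σ_{k+1} s`, `z = σ_{k+2} s`: `y + a x > 0`, `z + a y > 0` and
    -- Newton's `x z ≤ y²` leave no room for `y ≤ 0`
    nlinarith [esymm_mul_esymm_le_sq s k, hs k le_rfl]

theorem esymm_cons_le_of_nonpos {b : ℝ} {s : Multiset ℝ} {k j : ℕ} (hb : b ≤ 0)
    (h : b ::ₘ s ∈ gardingCone k) (hj : j ≤ k) : (b ::ₘ s).esymm j ≤ s.esymm j := by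
  rcases j with _ | j
  · simp
  obtain ⟨k, rfl⟩ : ∃ k', k = k' + 1 := ⟨k - 1, by omega⟩
  rw [esymm_cons_succ]
  nlinarith [mem_gardingCone_of_cons_mem h j (by omega)]

theorem esymm_add_le_of_nonpos {s t : Multiset ℝ} {k j : ℕ} (h : s + t ∈ gardingCone k)
    (ht : ∀ x ∈ t, x ≤ 0) (hj : j ≤ k) : (s + t).esymm j ≤ s.esymm j := by
  induction t using Multiset.induction generalizing j with
  | empty => simp
  | cons b t ih =>
    rw [add_cons] at h ⊢
    have hb := ht b (mem_cons_self b t)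
    have hst : s + t ∈ gardingCone k := fun i hi =>
      (h i hi).trans_le (esymm_cons_le_of_nonpos hb h hi)
    exact (esymm_cons_le_of_nonpos hb h hj).trans
      (ih hst (fun x hx => ht x (mem_cons_of_mem hx)) hj)

end Multiset

namespace List

open Multiset (gardingCone gardingCone_anti mem_gardingCone_of_cons_mem esymm_cons_succ
  esymm_eq_zero_of_card_lt)

variable {l : List ℝ}

theorem head_pos_of_mem_gardingCone {a : ℝ} (hl : (a :: l).Pairwise (· ≥ ·))
    (h : ((a :: l : List ℝ) : Multiset ℝ) ∈ gardingCone 1) : 0 < a := by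
  have hle : ∀ x ∈ ((a :: l : List ℝ) : Multiset ℝ), x ≤ a := by
    intro x hx
    rcases mem_cons.1 (Multiset.mem_coe.1 hx) with rfl | hx
    exacts [le_rfl, (pairwise_cons.1 hl).1 x hx]
  have hsum := (h 1 le_rfl).trans_le ((Multiset.esymm_one _).trans_le
    (Multiset.sum_le_card_nsmul _ a hle))
  rw [nsmul_eq_mul] at hsum
  exact pos_of_mul_pos_right hsum (Nat.cast_nonneg _)

theorem getElem_pos_of_mem_gardingCone {k i : ℕ} (hl : l.Pairwise (· ≥ ·))
    (h : (l : Multiset ℝ) ∈ gardingCone k) (hik : i < k) (hil : i < l.length) : 0 < l[i] := by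
  induction i generalizing l k with
  | zero =>
    cases l with
    | nil => simp at hil
    | cons a l => exact head_pos_of_mem_gardingCone hl (gardingCone_anti hik h)
  | succ i ih =>
    cases l with
    | nil => simp at hil
    | cons a l =>
      obtain ⟨k, rfl⟩ : ∃ k', k = k' + 1 := ⟨k - 1, by omega⟩
      rw [← Multiset.cons_coe] at h
      exact ih (pairwise_cons.1 hl).2 (mem_gardingCone_of_cons_mem h) (by omega) _

theorem prod_take_le_esymm {j : ℕ} (hl : l.Pairwise (· ≥ ·))
    (h : (l : Multiset ℝ) ∈ gardingCone (j + 1)) : (l.take j).prod ≤ (l : Multiset ℝ).esymm j := by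
  induction j generalizing l with
  | zero => simp
  | succ j ih =>
    cases l with
    | nil => exact absurd (h 1 (by omega)) (by rw [esymm_eq_zero_of_card_lt (by simp)]; simp)
    | cons a l =>
      have ha := head_pos_of_mem_gardingCone hl (gardingCone_anti (by omega) h)
      rw [← Multiset.cons_coe] at h ⊢
      have hl' := mem_gardingCone_of_cons_mem h
      rw [take_succ_cons, prod_cons, esymm_cons_succ]
      nlinarith [ih (pairwise_cons.1 hl).2 hl', hl' (j + 1) le_rfl]

theorem esymm_le_choose_mul_prod_take_of_nonneg (hl : l.Pairwise (· ≥ ·))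
    (h0 : ∀ x ∈ l, 0 ≤ x) (k : ℕ) :
    (l : Multiset ℝ).esymm k ≤ l.length.choose k * (l.take k).prod := by
  induction l generalizing k with
  | nil => cases k <;> simp [esymm_eq_zero_of_card_lt (s := (0 : Multiset ℝ)) (Nat.succ_pos _)]
  | cons a l ih =>
    rcases k with _ | k
    · simp
    obtain ⟨hal, hl'⟩ := pairwise_cons.1 hl
    have ha := h0 a mem_cons_self
    have h0' := fun x hx => h0 x (mem_cons_of_mem a hx)
    have hP : 0 ≤ (l.take k).prod := prod_nonneg fun x hx => h0' x (mem_of_mem_take hx)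
    have htake : l.length.choose (k + 1) * (l.take (k + 1)).prod ≤
        l.length.choose (k + 1) * (a * (l.take k).prod) := by
      rcases lt_or_ge k l.length with hk | hk
      · rw [prod_take_succ _ _ hk, mul_comm a]
        gcongr
        exact hal _ (getElem_mem hk)
      · simp [Nat.choose_eq_zero_of_lt (Nat.lt_succ_of_le hk)]
    rw [← Multiset.cons_coe, esymm_cons_succ, length_cons, Nat.choose_succ_succ', take_succ_cons,
      prod_cons, Nat.cast_add]
    nlinarith [ih hl' h0' (k + 1), mul_le_mul_of_nonneg_left (ih hl' h0' k) ha]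

theorem esymm_le_choose_mul_prod_take {k : ℕ} (hl : l.Pairwise (· ≥ ·))
    (h : (l : Multiset ℝ) ∈ gardingCone k) :
    (l : Multiset ℝ).esymm k ≤ l.length.choose k * (l.take k).prod := by
  rcases lt_or_ge l.length k with hk | hk
  · simp [esymm_eq_zero_of_card_lt (s := (l : Multiset ℝ)) (by simpa using hk),
      Nat.choose_eq_zero_of_lt hk]
  have hpos : ∀ x ∈ l.take k, 0 < x := fun x hx => by
    obtain ⟨i, hi, rfl⟩ := mem_take_iff_getElem.1 hx
    exact getElem_pos_of_mem_gardingCone hl h (by omega) _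
  set u := l.filter (fun x => 0 < x)
  have hsplit : (l : Multiset ℝ) = u + (l : Multiset ℝ).filter (fun x => ¬ 0 < x) := by
    simp only [u, ← Multiset.filter_coe, Multiset.filter_add_not]
  have hu : u.take k = l.take k := by
    have hu' : u = l.take k ++ (l.drop k).filter (fun x => 0 < x) := by
      simp only [u]
      conv_lhs => rw [← take_append_drop k l]
      rw [filter_append, filter_eq_self.2 (by simpa using hpos)]
    rw [hu', take_left' (length_take_of_le hk)]
  calc (l : Multiset ℝ).esymm k ≤ (u : Multiset ℝ).esymm k := by
        rw [hsplit] at h ⊢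
        exact Multiset.esymm_add_le_of_nonpos h (by simp) le_rfl
    _ ≤ u.length.choose k * (u.take k).prod :=
        esymm_le_choose_mul_prod_take_of_nonneg (hl.filter _)
          (fun x hx => (of_decide_eq_true (mem_filter.1 hx).2).le) k
    _ ≤ l.length.choose k * (l.take k).prod := by
        rw [hu]
        gcongr
        · exact (prod_pos hpos).le
        · exact length_filter_le _ _

theorem getElem_pow_le_prod_take (hl : l.Pairwise (· ≥ ·)) {r : ℕ} (hr : r < l.length)
    (h0 : 0 ≤ l[r]) : l[r] ^ r ≤ (l.take r).prod := by
  induction r generalizing l with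
  | zero => simp
  | succ r ih =>
    cases l with
    | nil => simp at hr
    | cons a l =>
      obtain ⟨hal, hl'⟩ := pairwise_cons.1 hl
      have hr' : r < l.length := by simpa using hr
      simp only [getElem_cons_succ, take_succ_cons, prod_cons] at h0 ⊢
      have hle : l[r] ≤ a := hal _ (getElem_mem _)
      rw [pow_succ']
      exact mul_le_mul hle (ih hl' hr' h0) (by positivity) (h0.trans hle)

theorem getElem_zero_mul_pow_le_esymm_pow (hl : l.Pairwise (· ≥ ·)) {r : ℕ}
    (h : (l : Multiset ℝ) ∈ gardingCone (r + 2)) (hl0 : 0 < l.length) :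
    l[0] * ((l : Multiset ℝ).esymm (r + 2) / l.length.choose (r + 2)) ^ r ≤
      (l : Multiset ℝ).esymm (r + 1) ^ (r + 1) := by
  have hlen : r + 2 ≤ l.length := by
    by_contra! hlt
    exact (h (r + 2) le_rfl).ne' (esymm_eq_zero_of_card_lt (by simpa using hlt))
  have hQ := esymm_le_choose_mul_prod_take hl h
  have hP := prod_take_le_esymm hl h
  have hC : (0 : ℝ) < l.length.choose (r + 2) := Nat.cast_pos.2 (Nat.choose_pos hlen)
  have hE : 0 ≤ (l : Multiset ℝ).esymm (r + 2) / l.length.choose (r + 2) :=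
    div_nonneg (h (r + 2) le_rfl).le hC.le
  rw [← div_le_iff₀' hC] at hQ
  cases l with
  | nil => simp at hl0
  | cons a l =>
    have hr : r < l.length := by simp at hlen; omega
    have ha : 0 < a := getElem_pos_of_mem_gardingCone hl h (i := 0) (by omega) (by simp)
    have hx : 0 < l[r] := getElem_pos_of_mem_gardingCone hl h (i := r + 1) (by omega) (by simpa)
    simp only [take_succ_cons, prod_cons, prod_take_succ l r hr, getElem_cons_zero] at hP hQ ⊢
    have hxP := getElem_pow_le_prod_take (pairwise_cons.1 hl).2 hr hx.le
    have hP0 : 0 ≤ (l.take r).prod := (pow_pos hx r).le.trans hxP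
    calc _ ≤ a * (a * ((l.take r).prod * l[r])) ^ r := by gcongr
      _ = a * l[r] ^ r * (a * (l.take r).prod) ^ r := by ring
      _ ≤ a * (l.take r).prod * (a * (l.take r).prod) ^ r := by gcongr
      _ = (a * (l.take r).prod) ^ (r + 1) := by ring
      _ ≤ _ := by gcongr

end List

theorem esymm_eq_esymm_coe_ofFn {n : ℕ} (lam : Fin n → ℝ) (j : ℕ) :
    esymm n j lam = ((List.ofFn lam : List ℝ) : Multiset ℝ).esymm j := by
  rw [esymm, ← Finset.esymm_map_val, Fin.univ_val_map]

/-- For `2 ≤ k ≤ n` and `m > 0` there is `C > 0` (depending only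
on `n, k, m`) such that every decreasing `λ ∈ Γ_k` with `σ_k(λ) ≥ m` satisfies
`σ_{k-1}(λ) ≥ C·λ_1^{1/(k-1)}`. -/
theorem stmt3 (n k : ℕ) (hk : 2 ≤ k) (hkn : k ≤ n) (m : ℝ) (hm : 0 < m) :
    ∃ C : ℝ, 0 < C ∧ ∀ lam : Fin n → ℝ,
      lam ∈ GardingCone n k →
      (∀ i j : Fin n, i ≤ j → lam j ≤ lam i) →
      m ≤ esymm n k lam →
      C * (lam ⟨0, by omega⟩) ^ ((1 : ℝ) / ((k : ℝ) - 1)) ≤ esymm n (k - 1) lam := by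
  obtain ⟨r, rfl⟩ : ∃ r, k = r + 2 := ⟨k - 2, by omega⟩
  have hc : (0 : ℝ) < n.choose (r + 2) := Nat.cast_pos.2 (Nat.choose_pos hkn)
  refine ⟨((m / n.choose (r + 2)) ^ r) ^ ((r + 1 : ℕ) : ℝ)⁻¹, by positivity, ?_⟩
  intro lam hlam hanti hm_le
  set l := List.ofFn lam
  have hl : l.Pairwise (· ≥ ·) := (List.sortedGE_ofFn_iff.2 hanti).pairwise
  have hcone : (l : Multiset ℝ) ∈ Multiset.gardingCone (r + 2) := by
    rintro (_ | j) hj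
    · simp
    · rw [← esymm_eq_esymm_coe_ofFn]; exact hlam _ (by omega) hj
  have hl0 : 0 < l.length := by simp [l]; omega
  have ha : (0 : ℝ) < l[0] := List.getElem_pos_of_mem_gardingCone hl hcone (by omega) hl0
  have key := List.getElem_zero_mul_pow_le_esymm_pow hl hcone hl0
  rw [List.length_ofFn, ← esymm_eq_esymm_coe_ofFn, ← esymm_eq_esymm_coe_ofFn] at key
  rw [List.getElem_ofFn] at ha key
  rw [show ((r + 2 : ℕ) : ℝ) - 1 = ((r + 1 : ℕ) : ℝ) by push_cast; ring, one_div,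
    show r + 2 - 1 = r + 1 by omega, ← Real.mul_rpow (by positivity) ha.le,
    ← Real.pow_rpow_inv_natCast (hlam (r + 1) (by omega) (by omega)).le (by omega : r + 1 ≠ 0)]
  refine Real.rpow_le_rpow (by positivity) (le_trans ?_ key) (by positivity)
  rw [mul_comm]
  gcongr
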